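/- Let F be a Finsler structure on U, g̃ a Riemannian metric on U, and a : U → ℝⁿ a smooth vector field such that (F²)_{||h} = ( g_{pq} a^p y^q ) · y_h on U × (ℝⁿ∖{0}) for every h. Then the tension of the identity map id : (U,g) → (U,g̃) satisfies τ^i(x,y) = −(n/2) a^i(x) for every i; in particular τ^i depends only on x. -/

import Mathlib

noncomputable section

open scoped BigOperators

/-- Partial derivative of a function on `Fin k → ℝ` in the `i`-th coordinate direction. -/
def pd {k : ℕ} {E : Type*} [NormedAddCommGroup E] [NormedSpace ℝ E]
    (f : (Fin k → ℝ) → E) (i : Fin k) (x : Fin k → ℝ) : E :=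
  fderiv ℝ f x (Pi.single i 1)

/-- The fundamental tensor `g_{ij}(x,y) = (1/2) ∂²(F²)/∂y^i∂y^j` of a Finsler function. -/
def gF {n : ℕ} (F : (Fin n → ℝ) → (Fin n → ℝ) → ℝ) (i j : Fin n)
    (x y : Fin n → ℝ) : ℝ :=
  (1 / 2) * pd (fun y' => pd (fun y'' => (F x y'') ^ 2) j y') i y

/-- The fundamental tensor as a matrix. -/
def gMat {n : ℕ} (F : (Fin n → ℝ) → (Fin n → ℝ) → ℝ) (x y : Fin n → ℝ) :
    Matrix (Fin n) (Fin n) ℝ :=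
  Matrix.of fun i j => gF F i j x y

/-- The inverse fundamental tensor `g^{ij}`. -/
def gInv {n : ℕ} (F : (Fin n → ℝ) → (Fin n → ℝ) → ℝ) (i j : Fin n)
    (x y : Fin n → ℝ) : ℝ :=
  (gMat F x y)⁻¹ i j

/-- `y_h := (1/2) ∂(F²)/∂y^h`. -/
def yLow {n : ℕ} (F : (Fin n → ℝ) → (Fin n → ℝ) → ℝ) (h : Fin n)
    (x y : Fin n → ℝ) : ℝ :=
  (1 / 2) * pd (fun y' => (F x y') ^ 2) h y

/-- A Finsler structure on an open set `U ⊆ ℝⁿ`, in coordinates. -/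
structure IsFinsler {n : ℕ} (U : Set (Fin n → ℝ))
    (F : (Fin n → ℝ) → (Fin n → ℝ) → ℝ) : Prop where
  isOpen : IsOpen U
  cont : ContinuousOn (fun p : (Fin n → ℝ) × (Fin n → ℝ) => F p.1 p.2) (U ×ˢ Set.univ)
  smooth : ContDiffOn ℝ (⊤ : ℕ∞) (fun p : (Fin n → ℝ) × (Fin n → ℝ) => F p.1 p.2)
    (U ×ˢ {y | y ≠ 0})
  homog : ∀ x ∈ U, ∀ y : Fin n → ℝ, ∀ l : ℝ, 0 < l → F x (l • y) = l * F x y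
  posdef : ∀ x ∈ U, ∀ y : Fin n → ℝ, y ≠ 0 → (gMat F x y).PosDef

/-- The spray coefficients `G^i` of a Finsler structure:
`2G^i = (1/2) g^{ih}( ∂²(F²)/∂y^h∂x^k · y^k − ∂(F²)/∂x^h )`. -/
def spray {n : ℕ} (F : (Fin n → ℝ) → (Fin n → ℝ) → ℝ) (i : Fin n)
    (x y : Fin n → ℝ) : ℝ :=
  (1 / 4) * ∑ h, gInv F i h x y *
    ((∑ k, pd (fun x' => pd (fun y' => (F x' y') ^ 2) h y) k x * y k)
      - pd (fun x' => (F x' y) ^ 2) h x)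

/-- The Cartan nonlinear connection `G^i_j := ∂G^i/∂y^j`. -/
def nCart {n : ℕ} (F : (Fin n → ℝ) → (Fin n → ℝ) → ℝ) (i j : Fin n)
    (x y : Fin n → ℝ) : ℝ :=
  pd (fun y' => spray F i x y') j y

/-- The adapted (horizontal) derivation `δ_i := ∂/∂x^i − G^j_i ∂/∂y^j` acting on
functions of `(x,y)`. -/
def hder {n : ℕ} (F : (Fin n → ℝ) → (Fin n → ℝ) → ℝ) (i : Fin n)
    (f : (Fin n → ℝ) → (Fin n → ℝ) → ℝ) (x y : Fin n → ℝ) : ℝ :=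
  pd (fun x' => f x' y) i x - ∑ j, nCart F j i x y * pd (fun y' => f x y') j y

/-- The Chern–Rund connection coefficients
`Γ^i_{jk} := (1/2) g^{ih}( δ_k g_{hj} + δ_j g_{hk} − δ_h g_{jk} )`. -/
def chern {n : ℕ} (F : (Fin n → ℝ) → (Fin n → ℝ) → ℝ) (i j k : Fin n)
    (x y : Fin n → ℝ) : ℝ :=
  (1 / 2) * ∑ h, gInv F i h x y *
    (hder F k (gF F h j) x y + hder F j (gF F h k) x y - hder F h (gF F j k) x y)

/-- `G^i_{jk} := ∂²G^i/∂y^j∂y^k`. -/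
def sprayH {n : ℕ} (F : (Fin n → ℝ) → (Fin n → ℝ) → ℝ) (i j k : Fin n)
    (x y : Fin n → ℝ) : ℝ :=
  pd (fun y' => pd (fun y'' => spray F i x y'') k y') j y

/-- The torsion trace `P_i := P^j_{ij} = G^j_{ij} − Γ^j_{ij}`. -/
def pOne {n : ℕ} (F : (Fin n → ℝ) → (Fin n → ℝ) → ℝ) (i : Fin n)
    (x y : Fin n → ℝ) : ℝ :=
  ∑ j, (sprayH F j i j x y - chern F j i j x y)
/-- A Riemannian metric on an open set of `ℝ^m`, in coordinates. -/
structure IsRiemann {m : ℕ} (Ut : Set (Fin m → ℝ))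
    (gt : (Fin m → ℝ) → Matrix (Fin m) (Fin m) ℝ) : Prop where
  isOpen : IsOpen Ut
  smooth : ∀ i j, ContDiffOn ℝ (⊤ : ℕ∞) (fun x => gt x i j) Ut
  symm : ∀ x ∈ Ut, (gt x).IsSymm
  posdef : ∀ x ∈ Ut, (gt x).PosDef

/-- The Christoffel symbols `γ̃^i_{jk}` of a Riemannian metric in coordinates. -/
def christ {m : ℕ} (gt : (Fin m → ℝ) → Matrix (Fin m) (Fin m) ℝ)
    (i j k : Fin m) (x : Fin m → ℝ) : ℝ :=
  (1 / 2) * ∑ h, (gt x)⁻¹ i h *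
    (pd (fun x' => gt x' h j) k x + pd (fun x' => gt x' h k) j x
      - pd (fun x' => gt x' j k) h x)
/-- The horizontal derivation `δ̃_j := ∂/∂x^j − γ̃^k_{jl} y^l ∂/∂y^k` of a Riemannian
metric, acting on functions of `(x,y)`; `f_{||j} := δ̃_j f`. -/
def rhder {n : ℕ} (gt : (Fin n → ℝ) → Matrix (Fin n) (Fin n) ℝ) (j : Fin n)
    (f : (Fin n → ℝ) → (Fin n → ℝ) → ℝ) (x y : Fin n → ℝ) : ℝ :=
  pd (fun x' => f x' y) j x
    - ∑ k, (∑ l, christ gt k j l x * y l) * pd (fun y' => f x y') k y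
/-- `y_{h||j} := δ̃_j y_h − γ̃^l_{hj} y_l`. -/
def yLowCov {n : ℕ} (F : (Fin n → ℝ) → (Fin n → ℝ) → ℝ)
    (gt : (Fin n → ℝ) → Matrix (Fin n) (Fin n) ℝ) (h j : Fin n)
    (x y : Fin n → ℝ) : ℝ :=
  rhder gt j (yLow F h) x y - ∑ l, christ gt l h j x * yLow F l x y

/-- `G̃^i(x,y) := (1/2) γ̃^i_{jk}(x) y^j y^k`. -/
def gTildeSpray {n : ℕ} (gt : (Fin n → ℝ) → Matrix (Fin n) (Fin n) ℝ) (i : Fin n)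
    (x y : Fin n → ℝ) : ℝ :=
  (1 / 2) * ∑ j, ∑ k, christ gt i j k x * y j * y k

/-- `B^i`, defined by `2B^i := (1/2) g^{ih}( 2 y_{h||j} y^j − (F²)_{||h} )`. -/
def bCoef {n : ℕ} (F : (Fin n → ℝ) → (Fin n → ℝ) → ℝ)
    (gt : (Fin n → ℝ) → Matrix (Fin n) (Fin n) ℝ) (i : Fin n)
    (x y : Fin n → ℝ) : ℝ :=
  (1 / 4) * ∑ h, gInv F i h x y *
    (2 * (∑ j, yLowCov F gt h j x y * y j)
      - rhder gt h (fun a b => (F a b) ^ 2) x y)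


section FinslerAux

open Filter

variable {m : ℕ}

lemma pd_congr {f g : (Fin m → ℝ) → ℝ} {x : Fin m → ℝ}
    (h : f =ᶠ[nhds x] g) (i : Fin m) : pd f i x = pd g i x := by
  unfold pd; rw [h.fderiv_eq]

lemma eventuallyEq_of_open {f g : (Fin m → ℝ) → ℝ} {s : Set (Fin m → ℝ)}
    (hs : IsOpen s) {x : Fin m → ℝ} (hx : x ∈ s) (h : ∀ z ∈ s, f z = g z) :
    f =ᶠ[nhds x] g := by
  filter_upwards [hs.mem_nhds hx] with z hz using h z hz

lemma pd_fun_add {f g : (Fin m → ℝ) → ℝ} {x : Fin m → ℝ}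
    (hf : DifferentiableAt ℝ f x) (hg : DifferentiableAt ℝ g x) (i : Fin m) :
    pd (fun z => f z + g z) i x = pd f i x + pd g i x := by
  unfold pd; rw [fderiv_fun_add hf hg]; simp

lemma pd_fun_mul {f g : (Fin m → ℝ) → ℝ} {x : Fin m → ℝ}
    (hf : DifferentiableAt ℝ f x) (hg : DifferentiableAt ℝ g x) (i : Fin m) :
    pd (fun z => f z * g z) i x = f x * pd g i x + g x * pd f i x := by
  unfold pd; rw [fderiv_fun_mul hf hg]; simp

lemma pd_fun_const_mul {f : (Fin m → ℝ) → ℝ} {x : Fin m → ℝ}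
    (hf : DifferentiableAt ℝ f x) (c : ℝ) (i : Fin m) :
    pd (fun z => c * f z) i x = c * pd f i x := by
  unfold pd; rw [fderiv_const_mul hf c]; simp

lemma pd_fun_sum {ι : Type*} (u : Finset ι) {f : ι → (Fin m → ℝ) → ℝ} {x : Fin m → ℝ}
    (hf : ∀ j ∈ u, DifferentiableAt ℝ (f j) x) (i : Fin m) :
    pd (fun z => ∑ j ∈ u, f j z) i x = ∑ j ∈ u, pd (f j) i x := by
  unfold pd; rw [fderiv_fun_sum hf]; simp

lemma pd_proj (l i : Fin m) (x : Fin m → ℝ) :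
    pd (fun z : Fin m → ℝ => z l) i x = if l = i then 1 else 0 := by
  unfold pd
  have h : (fun z : Fin m → ℝ => z l)
      = (ContinuousLinearMap.proj l : (Fin m → ℝ) →L[ℝ] ℝ) := rfl
  rw [h, ContinuousLinearMap.fderiv]
  simp [Pi.single_apply]

lemma clm_apply_eq_sum (L : (Fin m → ℝ) →L[ℝ] ℝ) (y : Fin m → ℝ) :
    L y = ∑ j, y j * L (Pi.single j 1) := by
  have h : y = ∑ j, (y j) • (Pi.single j 1 : Fin m → ℝ) := by
    funext t
    simp [Finset.sum_apply, Pi.single_apply]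
  conv_lhs => rw [h]
  rw [map_sum]
  simp [smul_eq_mul]

lemma euler_aux {g : (Fin m → ℝ) → ℝ} {y : Fin m → ℝ}
    (hg : DifferentiableAt ℝ g y) (d : ℕ)
    (hhom : ∀ l : ℝ, 0 < l → g (l • y) = l ^ d * g y) :
    ∑ j, y j * pd g j y = d * g y := by
  have h1 : HasDerivAt (fun l : ℝ => g (l • y)) (fderiv ℝ g y y) 1 := by
    have hs : HasDerivAt (fun l : ℝ => l • y) ((1 : ℝ) • y) 1 :=
      (hasDerivAt_id 1).smul_const y
    have hy1 : HasFDerivAt g (fderiv ℝ g y) ((1 : ℝ) • y) := by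
      rw [one_smul]; exact hg.hasFDerivAt
    have h := hy1.comp_hasDerivAt (1 : ℝ) hs
    rw [one_smul] at h; exact h
  have h2 : HasDerivAt (fun l : ℝ => l ^ d * g y) ((d : ℝ) * g y) 1 := by
    have := (hasDerivAt_pow d (1 : ℝ)).mul_const (g y)
    simpa using this
  have heq : (fun l : ℝ => g (l • y)) =ᶠ[nhds (1 : ℝ)] fun l : ℝ => l ^ d * g y := by
    filter_upwards [isOpen_Ioi.mem_nhds (show (0:ℝ) < 1 by norm_num)] with l hl
    exact hhom l hl
  have h3 : HasDerivAt (fun l : ℝ => g (l • y)) ((d : ℝ) * g y) 1 :=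
    h2.congr_of_eventuallyEq heq
  have h4 := h1.unique h3
  calc ∑ j, y j * pd g j y = fderiv ℝ g y y := (clm_apply_eq_sum (fderiv ℝ g y) y).symm
    _ = (d : ℝ) * g y := h4

lemma cdOn_diffAt {E' : Type*} [NormedAddCommGroup E'] [NormedSpace ℝ E']
    {G : Type*} [NormedAddCommGroup G] [NormedSpace ℝ G]
    {f : E' → G} {s : Set E'} (hf : ContDiffOn ℝ (⊤ : ℕ∞) f s) (hs : IsOpen s)
    {x : E'} (hx : x ∈ s) : DifferentiableAt ℝ f x :=
  ((hf x hx).differentiableWithinAt (by simp)).differentiableAt (hs.mem_nhds hx)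

lemma pd_contDiffOn {f : (Fin m → ℝ) → ℝ} {s : Set (Fin m → ℝ)}
    (hf : ContDiffOn ℝ (⊤ : ℕ∞) f s) (hs : IsOpen s) (i : Fin m) :
    ContDiffOn ℝ (⊤ : ℕ∞) (fun z => pd f i z) s := by
  have h1 : ContDiffOn ℝ (⊤ : ℕ∞) (fderiv ℝ f) s :=
    hf.fderiv_of_isOpen hs (le_of_eq rfl)
  exact h1.clm_apply contDiffOn_const

end FinslerAux

section FinslerAux2

open Filter

variable {n : ℕ}

lemma pd_fix_snd {Φ : ((Fin n → ℝ) × (Fin n → ℝ)) → ℝ} {x y : Fin n → ℝ}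
    (hΦ : DifferentiableAt ℝ Φ (x, y)) (k : Fin n) :
    pd (fun x' => Φ (x', y)) k x
      = fderiv ℝ Φ (x, y) (Pi.single k 1, 0) := by
  have h : HasFDerivAt (fun x' => Φ (x', y))
      ((fderiv ℝ Φ (x, y)).comp (ContinuousLinearMap.inl ℝ _ _)) x :=
    hΦ.hasFDerivAt.comp x (hasFDerivAt_prodMk_left x y)
  unfold pd
  rw [h.fderiv]
  simp

lemma pd_fix_fst {Φ : ((Fin n → ℝ) × (Fin n → ℝ)) → ℝ} {x y : Fin n → ℝ}
    (hΦ : DifferentiableAt ℝ Φ (x, y)) (h : Fin n) :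
    pd (fun y' => Φ (x, y')) h y
      = fderiv ℝ Φ (x, y) (0, Pi.single h 1) := by
  have hh : HasFDerivAt (fun y' => Φ (x, y'))
      ((fderiv ℝ Φ (x, y)).comp (ContinuousLinearMap.inr ℝ _ _)) y :=
    hΦ.hasFDerivAt.comp y (hasFDerivAt_prodMk_right x y)
  unfold pd
  rw [hh.fderiv]
  simp

lemma pd_mixed_symm {Φ : ((Fin n → ℝ) × (Fin n → ℝ)) → ℝ}
    {s : Set ((Fin n → ℝ) × (Fin n → ℝ))} (hs : IsOpen s)
    (hΦ : ContDiffOn ℝ (⊤ : ℕ∞) Φ s) {x y : Fin n → ℝ} (hxy : (x, y) ∈ s)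
    (k h : Fin n) :
    pd (fun x' => pd (fun y' => Φ (x', y')) h y) k x
      = pd (fun y' => pd (fun x' => Φ (x', y')) k x) h y := by
  have hΦi : ContDiffOn ℝ (⊤ : ℕ∞) Φ s := hΦ.of_le le_rfl
  have hD : ContDiffOn ℝ (⊤ : ℕ∞) (fderiv ℝ Φ) s :=
    hΦi.fderiv_of_isOpen hs (le_of_eq rfl)
  have hDxy : DifferentiableAt ℝ (fderiv ℝ Φ) (x, y) := cdOn_diffAt hD hs hxy
  set v : (Fin n → ℝ) × (Fin n → ℝ) := (Pi.single k 1, 0) with hv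
  set w : (Fin n → ℝ) × (Fin n → ℝ) := (0, Pi.single h 1) with hw
  -- LHS computation
  have e1 : (fun x' => pd (fun y' => Φ (x', y')) h y)
      =ᶠ[nhds x] (fun x' => fderiv ℝ Φ (x', y) w) := by
    have hop : IsOpen {x' : Fin n → ℝ | (x', y) ∈ s} :=
      hs.preimage (continuous_id.prodMk continuous_const)
    filter_upwards [hop.mem_nhds hxy] with x' hx'
    exact pd_fix_fst (cdOn_diffAt hΦi hs hx') h
  have hc1 : DifferentiableAt ℝ (fun x' => fderiv ℝ Φ (x', y)) x :=
    hDxy.comp x (DifferentiableAt.prodMk differentiableAt_id (differentiableAt_const y))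
  have hcomp1 : HasFDerivAt (fun x' => fderiv ℝ Φ (x', y))
      ((fderiv ℝ (fderiv ℝ Φ) (x, y)).comp (ContinuousLinearMap.inl ℝ _ _)) x :=
    hDxy.hasFDerivAt.comp x (hasFDerivAt_prodMk_left x y)
  have L1 : pd (fun x' => pd (fun y' => Φ (x', y')) h y) k x
      = fderiv ℝ (fderiv ℝ Φ) (x, y) v w := by
    rw [pd_congr e1 k]
    unfold pd
    rw [fderiv_clm_apply hc1 (differentiableAt_const w), hcomp1.fderiv]
    simp [hv]
  -- RHS computation
  have e2 : (fun y' => pd (fun x' => Φ (x', y')) k x)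
      =ᶠ[nhds y] (fun y' => fderiv ℝ Φ (x, y') v) := by
    have hop : IsOpen {y' : Fin n → ℝ | (x, y') ∈ s} :=
      hs.preimage (continuous_const.prodMk continuous_id)
    filter_upwards [hop.mem_nhds hxy] with y' hy'
    exact pd_fix_snd (cdOn_diffAt hΦi hs hy') k
  have hc2 : DifferentiableAt ℝ (fun y' => fderiv ℝ Φ (x, y')) y :=
    hDxy.comp y (DifferentiableAt.prodMk (differentiableAt_const x) differentiableAt_id)
  have hcomp2 : HasFDerivAt (fun y' => fderiv ℝ Φ (x, y'))
      ((fderiv ℝ (fderiv ℝ Φ) (x, y)).comp (ContinuousLinearMap.inr ℝ _ _)) y :=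
    hDxy.hasFDerivAt.comp y (hasFDerivAt_prodMk_right x y)
  have L2 : pd (fun y' => pd (fun x' => Φ (x', y')) k x) h y
      = fderiv ℝ (fderiv ℝ Φ) (x, y) w v := by
    rw [pd_congr e2 h]
    unfold pd
    rw [fderiv_clm_apply hc2 (differentiableAt_const v), hcomp2.fderiv]
    simp [hw]
  have hsym : IsSymmSndFDerivAt ℝ Φ (x, y) :=
    (hΦ.contDiffAt (hs.mem_nhds hxy)).isSymmSndFDerivAt
      (by rw [minSmoothness_of_isRCLikeNormedField]; exact WithTop.coe_le_coe.2 le_top)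
  rw [L1, L2, hsym.eq v w]

end FinslerAux2

section FinslerAux3

open Filter

variable {n : ℕ} {U : Set (Fin n → ℝ)} {F : (Fin n → ℝ) → (Fin n → ℝ) → ℝ}
  {gt : (Fin n → ℝ) → Matrix (Fin n) (Fin n) ℝ}

lemma sOpen (hF : IsFinsler U F) : IsOpen (U ×ˢ {y : Fin n → ℝ | y ≠ 0}) :=
  hF.isOpen.prod isOpen_ne

lemma f2_smooth (hF : IsFinsler U F) :
    ContDiffOn ℝ (⊤ : ℕ∞)
      (fun p : (Fin n → ℝ) × (Fin n → ℝ) => (F p.1 p.2) ^ 2)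
      (U ×ˢ {y : Fin n → ℝ | y ≠ 0}) :=
  hF.smooth.pow 2

lemma f2x_smooth (hF : IsFinsler U F) {x : Fin n → ℝ} (hx : x ∈ U) :
    ContDiffOn ℝ (⊤ : ℕ∞) (fun y : Fin n → ℝ => (F x y) ^ 2)
      {y : Fin n → ℝ | y ≠ 0} := by
  have h1 : ContDiffOn ℝ (⊤ : ℕ∞)
      (fun p : (Fin n → ℝ) × (Fin n → ℝ) => (F p.1 p.2) ^ 2)
      (U ×ˢ {y : Fin n → ℝ | y ≠ 0}) := (f2_smooth hF).of_le le_rfl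
  have h2 : ContDiffOn ℝ (⊤ : ℕ∞) (fun y : Fin n → ℝ => ((x, y) : _ × _))
      {y : Fin n → ℝ | y ≠ 0} :=
    (contDiff_const.prodMk contDiff_id).contDiffOn
  have h3 := h1.comp h2 (fun y hy => Set.mk_mem_prod hx hy)
  exact h3.congr (fun y _ => rfl)

lemma diff_f2x (hF : IsFinsler U F) {x : Fin n → ℝ} (hx : x ∈ U)
    {y : Fin n → ℝ} (hy : y ≠ 0) :
    DifferentiableAt ℝ (fun y' => (F x y') ^ 2) y :=
  cdOn_diffAt (f2x_smooth hF hx) isOpen_ne hy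

lemma diff_pdf2 (hF : IsFinsler U F) {x : Fin n → ℝ} (hx : x ∈ U)
    {y : Fin n → ℝ} (hy : y ≠ 0) (k : Fin n) :
    DifferentiableAt ℝ (fun y' => pd (fun y'' => (F x y'') ^ 2) k y') y :=
  cdOn_diffAt (pd_contDiffOn (f2x_smooth hF hx) isOpen_ne k) isOpen_ne hy

lemma diff_yLow (hF : IsFinsler U F) {x : Fin n → ℝ} (hx : x ∈ U)
    {y : Fin n → ℝ} (hy : y ≠ 0) (k : Fin n) :
    DifferentiableAt ℝ (fun y' => yLow F k x y') y := by
  unfold yLow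
  exact (diff_pdf2 hF hx hy k).const_mul _

lemma pd_yLow_eq (hF : IsFinsler U F) {x : Fin n → ℝ} (hx : x ∈ U)
    {y : Fin n → ℝ} (hy : y ≠ 0) (h k : Fin n) :
    pd (fun y' => yLow F k x y') h y = gF F h k x y := by
  unfold yLow gF
  exact pd_fun_const_mul (diff_pdf2 hF hx hy k) _ h

lemma pdf2_eq {x y : Fin n → ℝ} (k : Fin n) :
    pd (fun y' => (F x y') ^ 2) k y = 2 * yLow F k x y := by
  unfold yLow; ring

lemma pd_pdf2_eq {x y : Fin n → ℝ} (h k : Fin n) :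
    pd (fun y' => pd (fun y'' => (F x y'') ^ 2) k y') h y = 2 * gF F h k x y := by
  unfold gF; ring

lemma euler_f2 (hF : IsFinsler U F) {x : Fin n → ℝ} (hx : x ∈ U)
    {y : Fin n → ℝ} (hy : y ≠ 0) :
    ∑ j, yLow F j x y * y j = (F x y) ^ 2 := by
  have h := euler_aux (diff_f2x hF hx hy) 2 (fun l hl => by
    rw [hF.homog x hx y l hl]; ring)
  have h2 : ∀ j : Fin n, y j * pd (fun y' => (F x y') ^ 2) j y
      = 2 * (yLow F j x y * y j) := fun j => by rw [pdf2_eq]; ring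
  rw [Finset.sum_congr rfl (fun j _ => h2 j), ← Finset.mul_sum] at h
  push_cast at h
  linarith

lemma pdf2_scale (hF : IsFinsler U F) {x : Fin n → ℝ} (hx : x ∈ U)
    {y : Fin n → ℝ} (hy : y ≠ 0) {l : ℝ} (hl : 0 < l) (p : Fin n) :
    pd (fun y' => (F x y') ^ 2) p (l • y) = l * pd (fun y' => (F x y') ^ 2) p y := by
  have hly : l • y ≠ 0 := smul_ne_zero hl.ne' hy
  have hdl := diff_f2x hF hx hly
  have hc : HasFDerivAt (fun y' : Fin n → ℝ => l • y')
      (l • ContinuousLinearMap.id ℝ (Fin n → ℝ)) y :=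
    (hasFDerivAt_id y).const_smul l
  have H1 : HasFDerivAt (fun y' : Fin n → ℝ => (F x (l • y')) ^ 2)
      ((fderiv ℝ (fun y' => (F x y') ^ 2) (l • y)).comp
        (l • ContinuousLinearMap.id ℝ (Fin n → ℝ))) y :=
    hdl.hasFDerivAt.comp y hc
  have H2 : HasFDerivAt (fun y' : Fin n → ℝ => l ^ 2 * (F x y') ^ 2)
      ((l ^ 2) • fderiv ℝ (fun y' => (F x y') ^ 2) y) y :=
    (diff_f2x hF hx hy).hasFDerivAt.const_mul (l ^ 2)
  have heq : (fun y' : Fin n → ℝ => (F x (l • y')) ^ 2)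
      = fun y' => l ^ 2 * (F x y') ^ 2 := by
    funext y'; rw [hF.homog x hx y' l hl]; ring
  rw [heq] at H1
  have h3 := H1.unique H2
  have h4 := congrArg (fun (L : (Fin n → ℝ) →L[ℝ] ℝ) => L (Pi.single p 1)) h3
  simp only [ContinuousLinearMap.comp_apply, ContinuousLinearMap.smul_apply,
    ContinuousLinearMap.coe_smul', Pi.smul_apply, ContinuousLinearMap.coe_id',
    id_eq, map_smul, smul_eq_mul] at h4
  unfold pd
  have hl0 : l ≠ 0 := hl.ne'
  have : l * (l * fderiv ℝ (fun y' => (F x y') ^ 2) y (Pi.single p 1))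
      = l * fderiv ℝ (fun y' => (F x y') ^ 2) (l • y) (Pi.single p 1) := by
    rw [h4]; ring
  have := mul_left_cancel₀ hl0 this
  linarith [this]

lemma euler_gF (hF : IsFinsler U F) {x : Fin n → ℝ} (hx : x ∈ U)
    {y : Fin n → ℝ} (hy : y ≠ 0) (p : Fin n) :
    ∑ j, gF F j p x y * y j = yLow F p x y := by
  have h := euler_aux (g := fun y' => pd (fun y'' => (F x y'') ^ 2) p y')
    (diff_pdf2 hF hx hy p) 1 (fun l hl => by
      show pd (fun y'' => (F x y'') ^ 2) p (l • y)
        = l ^ 1 * pd (fun y'' => (F x y'') ^ 2) p y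
      rw [pdf2_scale hF hx hy hl p]; ring)
  have h2 : ∀ j : Fin n,
      y j * pd (fun y' => pd (fun y'' => (F x y'') ^ 2) p y') j y
        = 2 * (gF F j p x y * y j) := fun j => by rw [pd_pdf2_eq]; ring
  rw [Finset.sum_congr rfl (fun j _ => h2 j), ← Finset.mul_sum] at h
  beta_reduce at h
  have h3 : pd (fun y' => (F x y') ^ 2) p y = 2 * yLow F p x y := pdf2_eq p
  rw [h3] at h
  push_cast at h
  linarith

lemma gF_symm (hF : IsFinsler U F) {x : Fin n → ℝ} (hx : x ∈ U)
    {y : Fin n → ℝ} (hy : y ≠ 0) (p q : Fin n) :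
    gF F p q x y = gF F q p x y := by
  have h := (hF.posdef x hx y hy).1
  have h2 := h.apply q p
  simp only [star_trivial] at h2
  have e1 : gMat F x y p q = gF F p q x y := rfl
  have e2 : gMat F x y q p = gF F q p x y := rfl
  rw [e1, e2] at h2
  exact h2

lemma gInv_gF (hF : IsFinsler U F) {x : Fin n → ℝ} (hx : x ∈ U)
    {y : Fin n → ℝ} (hy : y ≠ 0) (i m : Fin n) :
    ∑ h, gInv F i h x y * gF F h m x y = if i = m then 1 else 0 := by
  have hpd := hF.posdef x hx y hy
  have hdet : IsUnit (gMat F x y).det := isUnit_iff_ne_zero.2 hpd.det_pos.ne'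
  have h := Matrix.nonsing_inv_mul (gMat F x y) hdet
  have h2 := congrFun (congrFun h i) m
  rw [Matrix.mul_apply] at h2
  rw [Matrix.one_apply] at h2
  exact h2

lemma christ_symm (hg : IsRiemann U gt) {x : Fin n → ℝ} (hx : x ∈ U) (i j k : Fin n) :
    christ gt i j k x = christ gt i k j x := by
  unfold christ
  congr 1
  apply Finset.sum_congr rfl
  intro h _
  have hjk : pd (fun x' => gt x' j k) h x = pd (fun x' => gt x' k j) h x := by
    apply pd_congr
    apply eventuallyEq_of_open hg.isOpen hx
    intro z hz
    exact (hg.symm z hz).apply k j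
  rw [hjk]; ring

end FinslerAux3

section SprayEq

open Filter

variable {n : ℕ} {U : Set (Fin n → ℝ)} {F : (Fin n → ℝ) → (Fin n → ℝ) → ℝ}
  {gt : (Fin n → ℝ) → Matrix (Fin n) (Fin n) ℝ} {a : (Fin n → ℝ) → Fin n → ℝ}

lemma spray_eq (hF : IsFinsler U F) (hg : IsRiemann U gt)
    (hFa : ∀ x ∈ U, ∀ y : Fin n → ℝ, y ≠ 0 → ∀ h : Fin n,
      rhder gt h (fun u v => (F u v) ^ 2) x y
        = (∑ p, ∑ q, gF F p q x y * a x p * y q) * yLow F h x y)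
    {x : Fin n → ℝ} (hx : x ∈ U) {y : Fin n → ℝ} (hy : y ≠ 0) (i : Fin n) :
    spray F i x y = gTildeSpray gt i x y + (1 / 4) * (F x y) ^ 2 * a x i := by
  -- φ simplification
  have hphi : ∀ y' : Fin n → ℝ, y' ≠ 0 →
      (∑ p, ∑ q, gF F p q x y' * a x p * y' q) = ∑ p, a x p * yLow F p x y' := by
    intro y' hy'
    apply Finset.sum_congr rfl
    intro p _
    have h1 : ∀ q : Fin n, gF F p q x y' * a x p * y' q
        = a x p * (gF F q p x y' * y' q) := fun q => by
      rw [gF_symm hF hx hy' p q]; ring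
    rw [Finset.sum_congr rfl (fun q _ => h1 q), ← Finset.mul_sum,
      euler_gF hF hx hy' p]
  -- solve hFa for the x-derivative of F²
  have hR : ∀ y' : Fin n → ℝ, y' ≠ 0 → ∀ k : Fin n,
      pd (fun x' => (F x' y') ^ 2) k x
        = (∑ p, a x p * yLow F p x y') * yLow F k x y'
          + ∑ m, (∑ l, christ gt m k l x * y' l) * (2 * yLow F m x y') := by
    intro y' hy' k
    have h1 := hFa x hx y' hy' k
    unfold rhder at h1
    beta_reduce at h1
    rw [hphi y' hy'] at h1
    have h2 : ∀ m : Fin n, pd (fun y'' => (F x y'') ^ 2) m y' = 2 * yLow F m x y' :=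
      fun m => pdf2_eq (F := F) (x := x) (y := y') m
    simp only [h2] at h1
    linarith [h1]
  -- mixed derivative via Clairaut symmetry
  have Mhk : ∀ h k : Fin n, pd (fun x' => pd (fun y' => (F x' y') ^ 2) h y) k x
      = pd (fun y' => (∑ p, a x p * yLow F p x y') * yLow F k x y'
          + ∑ m, (∑ l, christ gt m k l x * y' l) * (2 * yLow F m x y')) h y := by
    intro h k
    have h1 : pd (fun x' => pd (fun y' => (F x' y') ^ 2) h y) k x
        = pd (fun y' => pd (fun x' => (F x' y') ^ 2) k x) h y :=
      pd_mixed_symm (sOpen hF) (f2_smooth hF) (Set.mk_mem_prod hx hy) k h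
    rw [h1]
    apply pd_congr _ h
    apply eventuallyEq_of_open isOpen_ne hy
    intro y' hy'
    exact hR y' hy' k
  -- basic differentiability bundle
  have dyL : ∀ m : Fin n, DifferentiableAt ℝ (fun y' => yLow F m x y') y :=
    diff_yLow hF hx hy
  have dA : DifferentiableAt ℝ (fun y' => ∑ p, a x p * yLow F p x y') y :=
    DifferentiableAt.fun_sum (fun p _ => (dyL p).const_mul (a x p))
  have dproj : ∀ l : Fin n, DifferentiableAt ℝ (fun y' : Fin n → ℝ => y' l) y :=
    fun l => (ContinuousLinearMap.proj l : (Fin n → ℝ) →L[ℝ] ℝ).differentiableAt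
  have dc : ∀ m k : Fin n,
      DifferentiableAt ℝ (fun y' => ∑ l, christ gt m k l x * y' l) y :=
    fun m k => DifferentiableAt.fun_sum (fun l _ => (dproj l).const_mul _)
  have d2yL : ∀ m : Fin n, DifferentiableAt ℝ (fun y' => 2 * yLow F m x y') y :=
    fun m => (dyL m).const_mul 2
  have dterm : ∀ m k : Fin n, DifferentiableAt ℝ
      (fun y' => (∑ l, christ gt m k l x * y' l) * (2 * yLow F m x y')) y :=
    fun m k => (dc m k).mul (d2yL m)
  -- the key per-h identity
  have key : ∀ h : Fin n,
      (∑ k, pd (fun x' => pd (fun y' => (F x' y') ^ 2) h y) k x * y k)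
        - pd (fun x' => (F x' y) ^ 2) h x
      = (∑ p, a x p * gF F h p x y) * (F x y) ^ 2
        + 2 * ∑ m, gF F h m x y * (∑ k, ∑ l, christ gt m k l x * y k * y l) := by
    intro h
    have hsum : ∀ k : Fin n, pd (fun x' => pd (fun y' => (F x' y') ^ 2) h y) k x
        = (∑ p, a x p * gF F h p x y) * yLow F k x y
          + (∑ p, a x p * yLow F p x y) * gF F h k x y
          + ∑ m, (christ gt m k h x * (2 * yLow F m x y)
              + (∑ l, christ gt m k l x * y l) * (2 * gF F h m x y)) := by
      intro k
      rw [Mhk h k]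
      rw [pd_fun_add (dA.fun_mul (dyL k)) (DifferentiableAt.fun_sum (fun m _ => dterm m k)) h]
      rw [pd_fun_mul dA (dyL k) h]
      rw [pd_fun_sum Finset.univ (fun m _ => dterm m k) h]
      have pA : pd (fun y' => ∑ p, a x p * yLow F p x y') h y
          = ∑ p, a x p * gF F h p x y := by
        rw [pd_fun_sum Finset.univ (fun p _ => (dyL p).const_mul (a x p)) h]
        exact Finset.sum_congr rfl (fun p _ => by
          rw [pd_fun_const_mul (dyL p) (a x p) h, pd_yLow_eq hF hx hy h p])
      have pc : ∀ m : Fin n, pd (fun y' => ∑ l, christ gt m k l x * y' l) h y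
          = christ gt m k h x := by
        intro m
        rw [pd_fun_sum Finset.univ (fun l _ => (dproj l).const_mul _) h]
        have h3 : ∀ l : Fin n, pd (fun y' => christ gt m k l x * y' l) h y
            = christ gt m k l x * (if l = h then 1 else 0) := fun l => by
          rw [pd_fun_const_mul (dproj l) _ h, pd_proj l h y]
        rw [Finset.sum_congr rfl (fun l _ => h3 l)]
        simp
      have pterm : ∀ m : Fin n,
          pd (fun y' => (∑ l, christ gt m k l x * y' l) * (2 * yLow F m x y')) h y
            = christ gt m k h x * (2 * yLow F m x y)
              + (∑ l, christ gt m k l x * y l) * (2 * gF F h m x y) := by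
        intro m
        rw [pd_fun_mul (dc m k) (d2yL m) h]
        rw [pc m]
        rw [pd_fun_const_mul (dyL m) 2 h, pd_yLow_eq hF hx hy h m]
        ring
      rw [pA, pd_yLow_eq hF hx hy h k]
      rw [Finset.sum_congr rfl (fun m _ => pterm m)]
      ring
    rw [Finset.sum_congr rfl (fun k _ => by rw [hsum k])]
    rw [hR y hy h]
    -- algebra on finite sums
    have s1 : ∀ k : Fin n, ((∑ p, a x p * gF F h p x y) * yLow F k x y
          + (∑ p, a x p * yLow F p x y) * gF F h k x y
          + ∑ m, (christ gt m k h x * (2 * yLow F m x y)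
              + (∑ l, christ gt m k l x * y l) * (2 * gF F h m x y))) * y k
        = (∑ p, a x p * gF F h p x y) * (yLow F k x y * y k)
          + (∑ p, a x p * yLow F p x y) * (gF F h k x y * y k)
          + ((∑ m, christ gt m k h x * (2 * yLow F m x y) * y k)
            + ∑ m, (∑ l, christ gt m k l x * y l) * (2 * gF F h m x y) * y k) := by
      intro k
      rw [Finset.sum_add_distrib]
      rw [show ∀ A B C D : ℝ, (A + B + (C + D)) * y k
          = A * y k + B * y k + (C * y k + D * y k) from fun A B C D => by ring]
      congr 1
      · ring
      · congr 1 <;> exact Finset.sum_mul _ _ _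
    rw [Finset.sum_congr rfl (fun k _ => s1 k)]
    rw [Finset.sum_add_distrib, Finset.sum_add_distrib, Finset.sum_add_distrib]
    rw [← Finset.mul_sum, ← Finset.mul_sum]
    rw [euler_f2 hF hx hy]
    have s2 : ∑ k, gF F h k x y * y k = yLow F h x y := by
      rw [Finset.sum_congr rfl (fun k _ => by rw [gF_symm hF hx hy h k])]
      exact euler_gF hF hx hy h
    rw [s2]
    have s3 : (∑ k, ∑ m, christ gt m k h x * (2 * yLow F m x y) * y k)
        = ∑ m, (∑ l, christ gt m h l x * y l) * (2 * yLow F m x y) := by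
      rw [Finset.sum_comm]
      apply Finset.sum_congr rfl
      intro m _
      rw [Finset.sum_mul]
      apply Finset.sum_congr rfl
      intro k _
      rw [christ_symm hg hx m k h]
      ring
    rw [s3]
    have s4 : (∑ k, ∑ m, (∑ l, christ gt m k l x * y l) * (2 * gF F h m x y) * y k)
        = 2 * ∑ m, gF F h m x y * (∑ k, ∑ l, christ gt m k l x * y k * y l) := by
      simp only [Finset.mul_sum, Finset.sum_mul]
      rw [Finset.sum_comm]
      exact Finset.sum_congr rfl (fun m _ => Finset.sum_congr rfl (fun k _ =>
        Finset.sum_congr rfl (fun l _ => by ring)))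
    rw [s4]
    ring
  -- assemble the spray
  unfold spray
  rw [Finset.sum_congr rfl (fun h _ => by rw [key h])]
  have d1 : ∑ h, gInv F i h x y * ((∑ p, a x p * gF F h p x y) * (F x y) ^ 2
        + 2 * ∑ m, gF F h m x y * (∑ k, ∑ l, christ gt m k l x * y k * y l))
      = a x i * (F x y) ^ 2
        + 2 * ∑ k, ∑ l, christ gt i k l x * y k * y l := by
    have split : ∀ h : Fin n, gInv F i h x y * ((∑ p, a x p * gF F h p x y) * (F x y) ^ 2
          + 2 * ∑ m, gF F h m x y * (∑ k, ∑ l, christ gt m k l x * y k * y l))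
        = (∑ p, (a x p * (F x y) ^ 2) * (gInv F i h x y * gF F h p x y))
          + ∑ m, (2 * (∑ k, ∑ l, christ gt m k l x * y k * y l))
              * (gInv F i h x y * gF F h m x y) := by
      intro h
      rw [mul_add]
      congr 1
      · simp only [Finset.mul_sum, Finset.sum_mul]
        exact Finset.sum_congr rfl (fun p _ => by ring)
      · simp only [Finset.mul_sum, Finset.sum_mul]
        refine Finset.sum_congr rfl (fun m _ => ?_)
        refine Finset.sum_congr rfl (fun k _ => ?_)
        exact Finset.sum_congr rfl (fun l _ => by ring)
    rw [Finset.sum_congr rfl (fun h _ => split h)]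
    rw [Finset.sum_add_distrib, Finset.sum_comm]
    rw [Finset.sum_comm (s := Finset.univ) (t := Finset.univ)
      (f := fun h m => (2 * (∑ k, ∑ l, christ gt m k l x * y k * y l))
        * (gInv F i h x y * gF F h m x y))]
    have t1 : ∀ p : Fin n, ∑ h, (a x p * (F x y) ^ 2) * (gInv F i h x y * gF F h p x y)
        = (a x p * (F x y) ^ 2) * (if i = p then 1 else 0) := by
      intro p
      rw [← Finset.mul_sum, gInv_gF hF hx hy i p]
    have t2 : ∀ m : Fin n, ∑ h, (2 * (∑ k, ∑ l, christ gt m k l x * y k * y l))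
          * (gInv F i h x y * gF F h m x y)
        = (2 * (∑ k, ∑ l, christ gt m k l x * y k * y l)) * (if i = m then 1 else 0) := by
      intro m
      rw [← Finset.mul_sum, gInv_gF hF hx hy i m]
    rw [Finset.sum_congr rfl (fun p _ => t1 p), Finset.sum_congr rfl (fun m _ => t2 m)]
    simp [Finset.sum_ite_eq, mul_ite]
  rw [d1]
  unfold gTildeSpray
  ring

end SprayEq


/-- under `(F²)_{||h} = ( g_{pq} a^p y^q ) · y_h`, the tension of the
identity map `id : (U,g) → (U,g̃)` is `τ^i(x,y) = −(n/2) a^i(x)`, depending only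
on `x`. -/
theorem tension_of_identity_special_perturbation {n : ℕ} (hn : 1 ≤ n)
    (U : Set (Fin n → ℝ)) (F : (Fin n → ℝ) → (Fin n → ℝ) → ℝ) (hF : IsFinsler U F)
    (gt : (Fin n → ℝ) → Matrix (Fin n) (Fin n) ℝ) (hg : IsRiemann U gt)
    (a : (Fin n → ℝ) → Fin n → ℝ) (ha : ∀ i, ContDiffOn ℝ (⊤ : ℕ∞) (fun x => a x i) U)
    (hFa : ∀ x ∈ U, ∀ y : Fin n → ℝ, y ≠ 0 → ∀ h : Fin n,
      rhder gt h (fun u v => (F u v) ^ 2) x y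
        = (∑ p, ∑ q, gF F p q x y * a x p * y q) * yLow F h x y) :
    ∀ x ∈ U, ∀ y : Fin n → ℝ, y ≠ 0 → ∀ i : Fin n,
      ∑ j, ∑ k, gInv F j k x y * (christ gt i j k x - sprayH F i j k x y)
        = -((n : ℝ) / 2) * a x i := by
  intro x hx y hy i
  have hspray : ∀ y' : Fin n → ℝ, y' ≠ 0 →
      spray F i x y' = gTildeSpray gt i x y' + (1 / 4) * (F x y') ^ 2 * a x i :=
    fun y' hy' => spray_eq hF hg hFa hx hy' i
  have dproj : ∀ (l : Fin n) (y' : Fin n → ℝ),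
      DifferentiableAt ℝ (fun z : Fin n → ℝ => z l) y' :=
    fun l y' => (ContinuousLinearMap.proj l : (Fin n → ℝ) →L[ℝ] ℝ).differentiableAt
  have dsummand : ∀ (j k' : Fin n) (y' : Fin n → ℝ),
      DifferentiableAt ℝ (fun z : Fin n → ℝ => christ gt i j k' x * z j * z k') y' :=
    fun j k' y' => ((dproj j y').const_mul _).mul (dproj k' y')
  have dinner : ∀ (j : Fin n) (y' : Fin n → ℝ),
      DifferentiableAt ℝ (fun z : Fin n → ℝ => ∑ k', christ gt i j k' x * z j * z k') y' :=
    fun j y' => DifferentiableAt.fun_sum (fun k' _ => dsummand j k' y')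
  have dgts : ∀ y' : Fin n → ℝ, DifferentiableAt ℝ (fun z => gTildeSpray gt i x z) y' := by
    intro y'
    unfold gTildeSpray
    exact (DifferentiableAt.fun_sum (fun j _ => dinner j y')).const_mul _
  have pd_gts : ∀ (k : Fin n) (y' : Fin n → ℝ), pd (fun z => gTildeSpray gt i x z) k y'
      = (1 / 2) * ((∑ j, christ gt i j k x * y' j) + ∑ k', christ gt i k k' x * y' k') := by
    intro k y'
    unfold gTildeSpray
    rw [pd_fun_const_mul (DifferentiableAt.fun_sum (fun j _ => dinner j y')) _ k]
    rw [pd_fun_sum Finset.univ (fun j _ => dinner j y') k]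
    have hj : ∀ j : Fin n, pd (fun z : Fin n → ℝ => ∑ k', christ gt i j k' x * z j * z k') k y'
        = (if j = k then (1:ℝ) else 0) * (∑ k', christ gt i j k' x * y' k')
          + christ gt i j k x * y' j := by
      intro j
      rw [pd_fun_sum Finset.univ (fun k' _ => dsummand j k' y') k]
      have h4 : ∀ k' : Fin n, pd (fun z : Fin n → ℝ => christ gt i j k' x * z j * z k') k y'
          = christ gt i j k' x * y' j * (if k' = k then 1 else 0)
            + (if j = k then (1:ℝ) else 0) * (christ gt i j k' x * y' k') := by
        intro k'
        rw [pd_fun_mul ((dproj j y').const_mul _) (dproj k' y') k]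
        rw [pd_proj k' k y', pd_fun_const_mul (dproj j y') _ k, pd_proj j k y']
        ring
      rw [Finset.sum_congr rfl (fun k' _ => h4 k')]
      rw [Finset.sum_add_distrib, ← Finset.mul_sum, add_comm]
      congr 1
      simp [mul_ite]
    rw [Finset.sum_congr rfl (fun j _ => hj j)]
    rw [Finset.sum_add_distrib]
    have hd : ∑ j, (if j = k then (1:ℝ) else 0) * (∑ k', christ gt i j k' x * y' k')
        = ∑ k', christ gt i k k' x * y' k' := by
      simp [ite_mul]
    rw [hd]
    ring
  have step1 : ∀ y' : Fin n → ℝ, y' ≠ 0 → ∀ k : Fin n,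
      pd (fun y'' => spray F i x y'') k y'
        = (1 / 2) * ((∑ j, christ gt i j k x * y' j) + ∑ k', christ gt i k k' x * y' k')
          + (1 / 2) * a x i * yLow F k x y' := by
    intro y' hy' k
    have e : (fun y'' => spray F i x y'') =ᶠ[nhds y'] fun y'' =>
        gTildeSpray gt i x y'' + (1 / 4) * (F x y'') ^ 2 * a x i :=
      eventuallyEq_of_open isOpen_ne hy' (fun z hz => hspray z hz)
    rw [pd_congr e k]
    have d2 : DifferentiableAt ℝ (fun y'' => (1 / 4) * (F x y'') ^ 2 * a x i) y' :=
      ((diff_f2x hF hx hy').const_mul (1 / 4)).mul_const (a x i)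
    rw [pd_fun_add (dgts y') d2 k]
    rw [pd_gts k y']
    have h5 : pd (fun y'' => (1 / 4) * (F x y'') ^ 2 * a x i) k y'
        = (1 / 2) * a x i * yLow F k x y' := by
      have hfn : (fun y'' => (1 / 4) * (F x y'') ^ 2 * a x i)
          = fun y'' => ((1 / 4) * a x i) * (F x y'') ^ 2 := by
        funext z; ring
      rw [hfn, pd_fun_const_mul (diff_f2x hF hx hy') _ k,
        pdf2_eq (F := F) (x := x) (y := y') k]
      ring
    rw [h5]
  have step2 : ∀ j k : Fin n,
      sprayH F i j k x y = christ gt i j k x + (1 / 2) * a x i * gF F j k x y := by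
    intro j k
    unfold sprayH
    have e : (fun y' => pd (fun y'' => spray F i x y'') k y') =ᶠ[nhds y] (fun y' =>
        (1 / 2) * ((∑ j', christ gt i j' k x * y' j') + ∑ k', christ gt i k k' x * y' k')
          + (1 / 2) * a x i * yLow F k x y') :=
      eventuallyEq_of_open isOpen_ne hy (fun z hz => step1 z hz k)
    rw [pd_congr e j]
    have dlin1 : DifferentiableAt ℝ (fun y' => ∑ j', christ gt i j' k x * y' j') y :=
      DifferentiableAt.fun_sum (fun j' _ => (dproj j' y).const_mul _)
    have dlin2 : DifferentiableAt ℝ (fun y' => ∑ k', christ gt i k k' x * y' k') y :=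
      DifferentiableAt.fun_sum (fun k' _ => (dproj k' y).const_mul _)
    rw [pd_fun_add ((dlin1.fun_add dlin2).const_mul _)
      ((diff_yLow hF hx hy k).const_mul _) j]
    rw [pd_fun_const_mul (dlin1.fun_add dlin2) _ j, pd_fun_add dlin1 dlin2 j]
    rw [pd_fun_const_mul (diff_yLow hF hx hy k) _ j, pd_yLow_eq hF hx hy j k]
    have p1 : pd (fun y' => ∑ j', christ gt i j' k x * y' j') j y = christ gt i j k x := by
      rw [pd_fun_sum Finset.univ (fun j' _ => (dproj j' y).const_mul _) j]
      have h6 : ∀ j' : Fin n, pd (fun y' => christ gt i j' k x * y' j') j y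
          = christ gt i j' k x * (if j' = j then 1 else 0) := fun j' => by
        rw [pd_fun_const_mul (dproj j' y) _ j, pd_proj j' j y]
      rw [Finset.sum_congr rfl (fun j' _ => h6 j')]
      simp
    have p2 : pd (fun y' => ∑ k', christ gt i k k' x * y' k') j y = christ gt i k j x := by
      rw [pd_fun_sum Finset.univ (fun k' _ => (dproj k' y).const_mul _) j]
      have h7 : ∀ k' : Fin n, pd (fun y' => christ gt i k k' x * y' k') j y
          = christ gt i k k' x * (if k' = j then 1 else 0) := fun k' => by
        rw [pd_fun_const_mul (dproj k' y) _ j, pd_proj k' j y]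
      rw [Finset.sum_congr rfl (fun k' _ => h7 k')]
      simp
    rw [p1, p2, christ_symm hg hx i k j]
    ring
  have hfin : ∀ j k : Fin n, gInv F j k x y * (christ gt i j k x - sprayH F i j k x y)
      = (-(1 / 2) * a x i) * (gInv F j k x y * gF F j k x y) := by
    intro j k
    rw [step2 j k]
    ring
  rw [Finset.sum_congr rfl (fun j _ => Finset.sum_congr rfl (fun k _ => hfin j k))]
  have htrace : ∑ j, ∑ k, gInv F j k x y * gF F j k x y = (n : ℝ) := by
    have hsym : ∀ j k : Fin n, gInv F j k x y * gF F j k x y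
        = gInv F j k x y * gF F k j x y := fun j k => by
      rw [gF_symm hF hx hy j k]
    rw [Finset.sum_congr rfl (fun j _ =>
      Finset.sum_congr rfl (fun k _ => hsym j k))]
    rw [Finset.sum_congr rfl (fun j _ => gInv_gF hF hx hy j j)]
    simp [Finset.card_univ]
  rw [Finset.sum_congr rfl (fun j _ => (Finset.mul_sum ..).symm)]
  rw [← Finset.mul_sum, htrace]
  ring
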